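/- Let A, B be n×n complex matrices and T an invertible n×n complex matrix such that T* A* A T = B* B + E with ‖E‖ ≤ C δ⁴, where A = I + O(δ²), B = I + O(δ²) are Hermitian positive definite, and T*T = I + O(δ²) with ‖T‖ ≤ K uniformly. Then there exists a unitary matrix V such that ‖A·T - V·B‖ ≤ C' δ⁴ for a constant C' depending only on n, C, K, for all sufficiently small δ. -/

import Mathlib

open scoped Matrix.Norms.L2Operator ComplexOrder
open Matrix

/-!
Put `W = A T B⁻¹`; the hypothesis says `W* W = 1 + (B⁻¹)* E B⁻¹`, so `W` is `O(δ⁴)`-close to an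
isometry. The unitary factor `V = W |W|⁻¹` of its polar decomposition satisfies
`A T - V B = V (|W| - 1) B`, and `‖|W| - 1‖ ≤ ‖W* W - 1‖` since `|√x - 1| ≤ |x - 1|` on the
spectrum of `W* W`. This works in any unital C⋆-algebra.
-/

theorem Real.abs_sqrt_sub_one_le {x : ℝ} (hx : 0 ≤ x) : |√x - 1| ≤ |x - 1| := by
  have hfactor : x - 1 = (√x - 1) * (√x + 1) := by
    linear_combination (Real.sq_sqrt hx).symm
  rw [hfactor, abs_mul]
  exact le_mul_of_one_le_right (abs_nonneg _)
    ((le_add_of_nonneg_left (Real.sqrt_nonneg x)).trans (le_abs_self _))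

variable {A : Type*} [CStarAlgebra A]

theorem CFC.norm_sqrt_sub_one_le [PartialOrder A] [StarOrderedRing A] {a : A} (ha : 0 ≤ a) :
    ‖CFC.sqrt a - 1‖ ≤ ‖a - 1‖ := by
  have hsqrt : CFC.sqrt a = cfc Real.sqrt a := by
    refine CFC.sqrt_unique ?_ (cfc_nonneg fun x _ ↦ Real.sqrt_nonneg x)
    rw [← cfc_mul ..]
    exact (cfc_congr fun x hx ↦ Real.mul_self_sqrt (spectrum_nonneg_of_nonneg ha hx)).trans
      (cfc_id' ℝ a)
  have hsub : cfc Real.sqrt a - 1 = cfc (fun x ↦ √x - 1) a := by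
    rw [cfc_sub .., cfc_const_one ℝ a]
  have hsub' : a - 1 = cfc (fun x : ℝ ↦ x - 1) a := by
    rw [cfc_sub .., cfc_const_one ℝ a, cfc_id' ℝ a]
  rw [hsqrt, hsub]
  refine norm_cfc_le (norm_nonneg _) fun x hx ↦ ?_
  calc ‖√x - 1‖ ≤ ‖x - 1‖ := Real.abs_sqrt_sub_one_le (spectrum_nonneg_of_nonneg ha hx)
    _ ≤ ‖a - 1‖ := hsub' ▸ norm_apply_le_norm_cfc (fun x : ℝ ↦ x - 1) a hx

theorem IsUnit.exists_mem_unitary_norm_sub_le {w : A} (hw : IsUnit w) :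
    ∃ u ∈ unitary A, ‖w - u‖ ≤ ‖star w * w - 1‖ := by
  let _ := CStarAlgebra.spectralOrder A
  let _ := CStarAlgebra.spectralOrderedRing A
  have hgram : 0 ≤ star w * w := star_mul_self_nonneg w
  obtain ⟨p, hp⟩ : IsUnit (CFC.sqrt (star w * w)) :=
    (CFC.isUnit_sqrt_iff _ hgram).2 (hw.star.mul hw)
  have hpp : (p : A) * p = star w * w := hp ▸ CFC.sqrt_mul_sqrt_self _ hgram
  have hpsa : star (p : A) = p := hp ▸ (CFC.sqrt_nonneg _).isSelfAdjoint.star_eq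
  set u := w * ↑p⁻¹ with hu_def
  have hup : u * p = w := by simp [u, mul_assoc]
  have hu : u ∈ unitary A := by
    refine (hw.mul p⁻¹.isUnit).mem_unitary_of_star_mul_self ?_
    calc star u * u = star (↑p⁻¹ : A) * ((p : A) * p) * ↑p⁻¹ := by
          rw [hpp, hu_def, star_mul, mul_assoc, mul_assoc, mul_assoc]
      _ = star ((p : A) * ↑p⁻¹) := by
          rw [star_mul, hpsa, mul_assoc, mul_assoc, p.mul_inv, mul_one]
      _ = 1 := by rw [p.mul_inv, star_one]
  refine ⟨u, hu, ?_⟩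
  calc ‖w - u‖ = ‖u * ((p : A) - 1)‖ := by rw [mul_sub, hup, mul_one]
    _ = ‖(p : A) - 1‖ := CStarRing.norm_mem_unitary_mul _ hu
    _ ≤ ‖star w * w - 1‖ := hp ▸ CFC.norm_sqrt_sub_one_le hgram

theorem Units.exists_mem_unitary_norm_sub_mul_le {x : A} (hx : IsUnit x) (b : Aˣ) :
    ∃ u ∈ unitary A,
      ‖x - u * b‖ ≤ ‖(↑b⁻¹ : A)‖ ^ 2 * ‖(b : A)‖ * ‖star x * x - star (b : A) * b‖ := by
  set w := x * ↑b⁻¹ with hw_def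
  have hone : star (↑b⁻¹ : A) * (star (b : A) * b) * ↑b⁻¹ = 1 := by
    rw [← mul_assoc, ← star_mul, b.mul_inv, star_one, one_mul, b.mul_inv]
  have hgram : star w * w - 1 = star (↑b⁻¹ : A) * (star x * x - star (b : A) * b) * ↑b⁻¹ := by
    rw [mul_sub, sub_mul, hone, hw_def, star_mul]
    simp only [mul_assoc]
  obtain ⟨u, hu, hwu⟩ := (hx.mul b⁻¹.isUnit).exists_mem_unitary_norm_sub_le
  refine ⟨u, hu, ?_⟩
  have hxu : x - u * b = (w - u) * b := by
    rw [sub_mul, hw_def, mul_assoc, b.inv_mul, mul_one]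
  calc ‖x - u * b‖ ≤ ‖w - u‖ * ‖(b : A)‖ := hxu ▸ norm_mul_le _ _
    _ ≤ ‖star w * w - 1‖ * ‖(b : A)‖ := by gcongr
    _ ≤ ‖(↑b⁻¹ : A)‖ * ‖star x * x - star (b : A) * b‖ * ‖(↑b⁻¹ : A)‖ * ‖(b : A)‖ := by
        rw [hgram]
        gcongr
        refine (norm_mul_le _ _).trans ?_
        gcongr
        refine (norm_mul_le _ _).trans_eq ?_
        rw [norm_star]
    _ = ‖(↑b⁻¹ : A)‖ ^ 2 * ‖(b : A)‖ * ‖star x * x - star (b : A) * b‖ := by ring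

theorem IsUnit.exists_mem_unitary_norm_sub_mul_le_of_norm_sub_one_le {x b : A}
    (hx : IsUnit x) (hb : ‖b - 1‖ ≤ 1 / 2) :
    ∃ u ∈ unitary A, ‖x - u * b‖ ≤ 6 * ‖star x * x - star b * b‖ := by
  nontriviality A
  have ht : ‖1 - b‖ < 1 := by rw [norm_sub_rev]; linarith
  set b' := Units.oneSub (1 - b) ht
  have hb' : (b' : A) = b := sub_sub_cancel 1 b
  have hinv : ‖(↑b'⁻¹ : A)‖ ≤ 2 := by
    refine (tsum_geometric_le_of_norm_lt_one _ ht).trans ?_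
    rw [CStarRing.norm_one, sub_self, zero_add, norm_sub_rev,
      inv_le_comm₀ (by linarith) two_pos]
    linarith
  have hnorm : ‖b‖ ≤ 3 / 2 := by
    calc ‖b‖ = ‖(b - 1) + 1‖ := by rw [sub_add_cancel]
      _ ≤ ‖b - 1‖ + ‖(1 : A)‖ := norm_add_le _ _
      _ ≤ 3 / 2 := by rw [CStarRing.norm_one]; linarith
  obtain ⟨u, hu, hle⟩ := Units.exists_mem_unitary_norm_sub_mul_le hx b'
  rw [hb'] at hle
  refine ⟨u, hu, hle.trans ?_⟩
  calc _ ≤ 2 ^ 2 * (3 / 2) * ‖star x * x - star b * b‖ := by gcongr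
    _ = 6 * ‖star x * x - star b * b‖ := by norm_num

theorem approx_isometry_unitary_comparison_general (n : ℕ) (C K : ℝ) (hC : 0 ≤ C) :
    ∃ C' δ₀ : ℝ, 0 < C' ∧ 0 < δ₀ ∧
      ∀ δ : ℝ, 0 < δ → δ < δ₀ →
        ∀ A B T E : Matrix (Fin n) (Fin n) ℂ,
          A.PosDef → B.PosDef → IsUnit T →
          ‖A - 1‖ ≤ C * δ ^ 2 → ‖B - 1‖ ≤ C * δ ^ 2 →
          ‖Tᴴ * T - 1‖ ≤ C * δ ^ 2 → ‖T‖ ≤ K →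
          Tᴴ * Aᴴ * A * T = Bᴴ * B + E → ‖E‖ ≤ C * δ ^ 4 →
          ∃ V ∈ Matrix.unitaryGroup (Fin n) ℂ, ‖A * T - V * B‖ ≤ C' * δ ^ 4 := by
  refine ⟨6 * C + 1, 1 / (2 * C + 1), by positivity, by positivity, ?_⟩
  intro δ hδ hδ₀ A B T E hA _ hT _ hB _ _ hgram hE
  have hsmall : C * δ ^ 2 ≤ 1 / 2 := by
    rw [lt_div_iff₀ (by positivity)] at hδ₀
    nlinarith [mul_nonneg hC hδ.le]
  have hE' : star (A * T) * (A * T) - star B * B = E := by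
    rw [star_eq_conjTranspose, star_eq_conjTranspose, conjTranspose_mul, ← mul_assoc,
      hgram, add_sub_cancel_left]
  obtain ⟨V, hV, hle⟩ :=
    (hA.isUnit.mul hT).exists_mem_unitary_norm_sub_mul_le_of_norm_sub_one_le (hB.trans hsmall)
  refine ⟨V, hV, ?_⟩
  calc ‖A * T - V * B‖ ≤ 6 * ‖E‖ := hE' ▸ hle
    _ ≤ 6 * (C * δ ^ 4) := by gcongr
    _ ≤ (6 * C + 1) * δ ^ 4 := by nlinarith [pow_pos hδ 4]

/-- If `Tᴴ·Aᴴ·A·T = Bᴴ·B + E` with `‖E‖ ≤ Cδ⁴`, where `A, B` are Hermitian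
positive definite with `‖A - I‖, ‖B - I‖ ≤ Cδ²`, `T` is invertible with
`‖TᴴT - I‖ ≤ Cδ²` and `‖T‖ ≤ K`, then there is a unitary `V` with
`‖A·T - V·B‖ ≤ C'·δ⁴`, where `C'` depends only on `n`, `C`, `K`. -/
theorem approx_isometry_unitary_comparison (n : ℕ) (C K : ℝ) (hC : 0 ≤ C) (hK : 0 ≤ K) :
    ∃ C' δ₀ : ℝ, 0 < C' ∧ 0 < δ₀ ∧
      ∀ δ : ℝ, 0 < δ → δ < δ₀ →
        ∀ A B T E : Matrix (Fin n) (Fin n) ℂ,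
          A.PosDef → B.PosDef → IsUnit T →
          ‖A - 1‖ ≤ C * δ ^ 2 → ‖B - 1‖ ≤ C * δ ^ 2 →
          ‖Tᴴ * T - 1‖ ≤ C * δ ^ 2 → ‖T‖ ≤ K →
          Tᴴ * Aᴴ * A * T = Bᴴ * B + E → ‖E‖ ≤ C * δ ^ 4 →
          ∃ V ∈ Matrix.unitaryGroup (Fin n) ℂ, ‖A * T - V * B‖ ≤ C' * δ ^ 4 :=
  approx_isometry_unitary_comparison_general n C K hC
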